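/- Let Σ₁, Σ₂ be positive definite d×d matrices, m₁, m₂ ∈ ℝ^d, and define T = Σ₁^{-1/2} (Σ₁^{1/2} Σ₂ Σ₁^{1/2})^{1/2} Σ₁^{-1/2} and t = m₂ − T m₁. Then the affine map x ↦ T x + t pushes the Gaussian N(m₁, Σ₁) forward to N(m₂, Σ₂). -/

import Mathlib

open MeasureTheory Matrix Real

open Classical in
noncomputable def msqrt {d : ℕ} (A : Matrix (Fin d) (Fin d) ℝ) : Matrix (Fin d) (Fin d) ℝ :=
  if h : A.PosSemidef then
    (h.1.eigenvectorUnitary : Matrix (Fin d) (Fin d) ℝ) *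
      diagonal (fun i => ((Real.sqrt (h.1.eigenvalues i) : ℝ) : ℝ)) *
      (star h.1.eigenvectorUnitary : Matrix (Fin d) (Fin d) ℝ)
  else 0

noncomputable def gaussianPdf {ι : Type*} [Fintype ι] [DecidableEq ι]
    (m : EuclideanSpace ℝ ι) (S : Matrix ι ι ℝ) (x : EuclideanSpace ℝ ι) : ℝ :=
  Real.sqrt (((2 * Real.pi) ^ (Fintype.card ι) * S.det)⁻¹) *
    Real.exp (-(1 / 2) * ∑ i, ∑ j, (x i - m i) * S⁻¹ i j * (x j - m j))

noncomputable def gaussian {ι : Type*} [Fintype ι] [DecidableEq ι]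
    (m : EuclideanSpace ℝ ι) (S : Matrix ι ι ℝ) : Measure (EuclideanSpace ℝ ι) :=
  volume.withDensity fun x => ENNReal.ofReal (gaussianPdf m S x)

noncomputable def KLdiv {ι : Type*} [Fintype ι]
    (α β : Measure (EuclideanSpace ℝ ι)) : ℝ :=
  (∫ x, Real.log ((α.rnDeriv β x).toReal) ∂α) - (β Set.univ).toReal + (α Set.univ).toReal


/-- The identity map regarding a plain vector as a point of Euclidean space. -/
noncomputable def toEuc {ι : Type*} [Fintype ι] (v : ι → ℝ) : EuclideanSpace ℝ ι :=
  (WithLp.equiv 2 (ι → ℝ)).symm v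

/-! With `s = Σ₁^{1/2}` and `r = (s Σ₂ s)^{1/2}` we have `T = s⁻¹ r s⁻¹`, so
`T Σ₁ Tᵀ = s⁻¹ r² s⁻¹ = Σ₂` and `det T ≠ 0`. For any invertible `T` the change of variables
`x ↦ T x + t` scales Lebesgue measure by `|det T|⁻¹` and carries the density of `N(m, Σ)` to
`|det T|` times that of `N(T m + t, T Σ Tᵀ)`: the quadratic forms agree since
`Tᵀ (T Σ Tᵀ)⁻¹ T = Σ⁻¹`, and `det (T Σ Tᵀ) = (det T)² det Σ`. -/

open scoped ENNReal

section
variable {d : ℕ} {A : Matrix (Fin d) (Fin d) ℝ}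

theorem msqrt_eq_cfc (hA : A.PosSemidef) : msqrt A = cfc Real.sqrt A := by
  rw [hA.1.cfc_eq, IsHermitian.cfc, Unitary.conjStarAlgAut_apply, msqrt, dif_pos hA]
  rfl

theorem transpose_msqrt (hA : A.PosSemidef) : (msqrt A)ᵀ = msqrt A := by
  rw [← conjTranspose_eq_transpose_of_trivial, msqrt_eq_cfc hA]
  exact IsSelfAdjoint.cfc

theorem msqrt_mul_self (hA : A.PosSemidef) : msqrt A * msqrt A = A := by
  rw [msqrt_eq_cfc hA, ← cfc_mul Real.sqrt Real.sqrt A]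
  conv_rhs => rw [← cfc_id ℝ A hA.1]
  refine cfc_congr fun x hx => ?_
  rw [hA.1.spectrum_real_eq_range_eigenvalues] at hx
  obtain ⟨i, rfl⟩ := hx
  exact Real.mul_self_sqrt (hA.eigenvalues_nonneg i)

end

namespace Matrix
variable {ι R : Type*} [Fintype ι]

theorem sum_sum_mul_mul_eq_dotProduct_mulVec [CommSemiring R] (A : Matrix ι ι R) (v : ι → R) :
    ∑ i, ∑ j, v i * A i j * v j = v ⬝ᵥ A *ᵥ v := by
  simp only [dotProduct, mulVec, Finset.mul_sum, mul_assoc]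

theorem mulVec_dotProduct_mulVec_mulVec [CommSemiring R] (T A : Matrix ι ι R) (u : ι → R) :
    (T *ᵥ u) ⬝ᵥ A *ᵥ (T *ᵥ u) = u ⬝ᵥ (Tᵀ * A * T) *ᵥ u := by
  rw [← mulVec_mulVec, ← mulVec_mulVec, dotProduct_mulVec u, vecMul_transpose]

variable [DecidableEq ι] [CommRing R]

theorem transpose_mul_inv_mul_mul {T : Matrix ι ι R} (hT : IsUnit T.det) (S : Matrix ι ι R) :
    Tᵀ * (T * S * Tᵀ)⁻¹ * T = S⁻¹ := by
  have hTt : IsUnit Tᵀ.det := by rwa [det_transpose]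
  rw [mul_inv_rev, mul_inv_rev, ← Matrix.mul_assoc, ← Matrix.mul_assoc, mul_nonsing_inv _ hTt,
    Matrix.one_mul, Matrix.mul_assoc, nonsing_inv_mul _ hT, Matrix.mul_one]

theorem mul_mul_transpose_eq_of_mul_self_eq {s r S₁ S₂ : Matrix ι ι R} (hs : IsUnit s.det)
    (hsT : sᵀ = s) (hrT : rᵀ = r) (hS₁ : s * s = S₁) (hr : r * r = s * S₂ * s) :
    s⁻¹ * r * s⁻¹ * S₁ * (s⁻¹ * r * s⁻¹)ᵀ = S₂ := by
  rw [transpose_mul, transpose_mul, transpose_nonsing_inv, hsT, hrT, ← hS₁]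
  calc s⁻¹ * r * s⁻¹ * (s * s) * (s⁻¹ * (r * s⁻¹))
      = s⁻¹ * (r * (s⁻¹ * s) * (s * s⁻¹) * r) * s⁻¹ := by simp only [Matrix.mul_assoc]
    _ = s⁻¹ * (s * S₂ * s) * s⁻¹ := by
        rw [nonsing_inv_mul _ hs, mul_nonsing_inv _ hs, Matrix.mul_one, Matrix.mul_one, hr]
    _ = S₂ := by
        simp only [Matrix.mul_assoc, nonsing_inv_mul_cancel_left _ _ hs, mul_nonsing_inv _ hs,
          Matrix.mul_one]

end Matrix

theorem MeasurableEmbedding.map_withDensity_comp {α β : Type*} [MeasurableSpace α]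
    [MeasurableSpace β] {f : α → β} (hf : MeasurableEmbedding f) (μ : Measure α)
    (g : β → ℝ≥0∞) : (μ.withDensity (g ∘ f)).map f = (μ.map f).withDensity g := by
  ext s hs
  rw [hf.map_apply, withDensity_apply _ (hf.measurable hs), withDensity_apply _ hs,
    hf.restrict_map, hf.lintegral_map]
  rfl

section
variable {ι : Type*} [Fintype ι] [DecidableEq ι]

theorem measurableEmbedding_affine {T : Matrix ι ι ℝ} (hT : T.det ≠ 0)
    (t : EuclideanSpace ℝ ι) :
    MeasurableEmbedding fun x : EuclideanSpace ℝ ι => toEuc (T *ᵥ x) + t := by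
  have hdet : LinearMap.det (T.toLpLin 2 2) ≠ 0 := by rwa [LinearMap.det_toLpLin]
  exact (measurableEmbedding_addRight t).comp
    ((T.toLpLin 2 2).equivOfDetNeZero hdet).toContinuousLinearEquiv.toHomeomorph.measurableEmbedding

theorem map_volume_affine {T : Matrix ι ι ℝ} (hT : T.det ≠ 0) (t : EuclideanSpace ℝ ι) :
    (volume : Measure (EuclideanSpace ℝ ι)).map
      (fun x : EuclideanSpace ℝ ι => toEuc (T *ᵥ x) + t) =
      ENNReal.ofReal |T.det⁻¹| • volume := by
  have hlin := (volume : Measure (EuclideanSpace ℝ ι)).map_linearMap_addHaar_eq_smul_addHaar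
    (f := T.toLpLin 2 2) (by rwa [LinearMap.det_toLpLin])
  rw [LinearMap.det_toLpLin] at hlin
  change Measure.map ((· + t) ∘ T.toLpLin 2 2) volume = _
  rw [← Measure.map_map (measurable_add_const t)
    (T.toLpLin 2 2).continuous_of_finiteDimensional.measurable, hlin, Measure.map_smul,
    map_add_right_eq_self]

theorem gaussianPdf_affine (m : EuclideanSpace ℝ ι) (S : Matrix ι ι ℝ) {T : Matrix ι ι ℝ}
    (hT : T.det ≠ 0) (t x : EuclideanSpace ℝ ι) :
    gaussianPdf m S x =
      |T.det| * gaussianPdf (toEuc (T *ᵥ m) + t) (T * S * Tᵀ) (toEuc (T *ᵥ x) + t) := by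
  have hdiff : ∀ i, (toEuc (T *ᵥ x) + t) i - (toEuc (T *ᵥ m) + t) i = (T *ᵥ (⇑x - ⇑m)) i := by
    intro i
    rw [mulVec_sub]
    simp [toEuc]
  have hquad : ∑ i, ∑ j, ((toEuc (T *ᵥ x) + t) i - (toEuc (T *ᵥ m) + t) i) *
        (T * S * Tᵀ)⁻¹ i j * ((toEuc (T *ᵥ x) + t) j - (toEuc (T *ᵥ m) + t) j) =
      ∑ i, ∑ j, (x i - m i) * S⁻¹ i j * (x j - m j) := by
    simp only [hdiff, sum_sum_mul_mul_eq_dotProduct_mulVec, mulVec_dotProduct_mulVec_mulVec,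
      transpose_mul_inv_mul_mul (isUnit_iff_ne_zero.mpr hT)]
    rfl
  have hnorm : |T.det| * √(((2 * π) ^ Fintype.card ι * (T * S * Tᵀ).det)⁻¹) =
      √(((2 * π) ^ Fintype.card ι * S.det)⁻¹) := by
    rw [det_mul, det_mul, det_transpose,
      show (2 * π) ^ Fintype.card ι * (T.det * S.det * T.det) =
        (2 * π) ^ Fintype.card ι * S.det * T.det ^ 2 by ring,
      mul_inv, Real.sqrt_mul' _ (by positivity), Real.sqrt_inv (T.det ^ 2), Real.sqrt_sq_eq_abs]
    field_simp
  unfold gaussianPdf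
  rw [hquad, ← hnorm]
  ring

theorem map_gaussian_affine (m : EuclideanSpace ℝ ι) (S : Matrix ι ι ℝ) {T : Matrix ι ι ℝ}
    (hT : T.det ≠ 0) (t : EuclideanSpace ℝ ι) :
    (gaussian m S).map (fun x : EuclideanSpace ℝ ι => toEuc (T *ᵥ x) + t) =
      gaussian (toEuc (T *ᵥ m) + t) (T * S * Tᵀ) := by
  set f := fun x : EuclideanSpace ℝ ι => toEuc (T *ᵥ x) + t
  set g := fun y => ENNReal.ofReal (gaussianPdf (toEuc (T *ᵥ m) + t) (T * S * Tᵀ) y)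
  have hdensity :
      (fun x => ENNReal.ofReal (gaussianPdf m S x)) = ENNReal.ofReal |T.det| • (g ∘ f) := by
    ext x
    rw [gaussianPdf_affine m S hT t x, ENNReal.ofReal_mul (abs_nonneg _)]
    rfl
  have hscale : ENNReal.ofReal |T.det| * ENNReal.ofReal |T.det⁻¹| = 1 := by
    rw [← ENNReal.ofReal_mul (abs_nonneg _), ← abs_mul, mul_inv_cancel₀ hT, abs_one,
      ENNReal.ofReal_one]
  calc (gaussian m S).map f = ENNReal.ofReal |T.det| • (volume.map f).withDensity g := by
        rw [gaussian, hdensity, withDensity_smul' _ _ ENNReal.ofReal_ne_top, Measure.map_smul,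
          (measurableEmbedding_affine hT t).map_withDensity_comp]
    _ = gaussian (toEuc (T *ᵥ m) + t) (T * S * Tᵀ) := by
        rw [map_volume_affine hT, withDensity_smul_measure, smul_smul, hscale, one_smul]
        rfl

end

/-- The affine map `x ↦ T x + t` with `T = Σ₁^{-1/2}(Σ₁^{1/2} Σ₂ Σ₁^{1/2})^{1/2} Σ₁^{-1/2}`
and `t = m₂ - T m₁` pushes `N(m₁, Σ₁)` forward to `N(m₂, Σ₂)`. -/
theorem gaussian_pushforward_affine {d : ℕ}
    (S₁ S₂ : Matrix (Fin d) (Fin d) ℝ)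
    (hS₁ : S₁.PosDef) (hS₂ : S₂.PosDef)
    (m₁ m₂ : EuclideanSpace ℝ (Fin d))
    (T : Matrix (Fin d) (Fin d) ℝ)
    (hT : T = (msqrt S₁)⁻¹ * msqrt (msqrt S₁ * S₂ * msqrt S₁) * (msqrt S₁)⁻¹)
    (t : EuclideanSpace ℝ (Fin d))
    (ht : t = m₂ - toEuc (T.mulVec m₁)) :
    Measure.map (fun x : EuclideanSpace ℝ (Fin d) => toEuc (T.mulVec x) + t)
      (gaussian m₁ S₁) = gaussian m₂ S₂ := by
  set s := msqrt S₁
  have hss : s * s = S₁ := msqrt_mul_self hS₁.posSemidef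
  have hsT : sᵀ = s := transpose_msqrt hS₁.posSemidef
  have hs : IsUnit s.det := by
    refine isUnit_iff_ne_zero.mpr fun h => hS₁.det_pos.ne' ?_
    rw [← hss, det_mul, h, zero_mul]
  have hM : (s * S₂ * s).PosSemidef := by
    simpa only [conjTranspose_eq_transpose_of_trivial, hsT] using
      hS₂.posSemidef.mul_mul_conjTranspose_same s
  have hcov : T * S₁ * Tᵀ = S₂ := by
    rw [hT]
    exact mul_mul_transpose_eq_of_mul_self_eq hs hsT (transpose_msqrt hM) hss (msqrt_mul_self hM)
  have hTdet : T.det ≠ 0 := fun h => hS₂.det_pos.ne' (by rw [← hcov, det_mul, det_mul, h]; ring)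
  rw [map_gaussian_affine m₁ S₁ hTdet, hcov, ht, add_sub_cancel]
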